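/- (Factorization lemma) Let f be a regular quaternionic polynomial of degree n > 0 and α₁ a zero of f. Then there exist quaternions α₂, …, α_n and c ≠ 0 such that f(w) = (w − α₁) * ((w − α₂) * ( ⋯ * ((w − α_n) * c))), and each α_{k+1} is conjugate to some zero of f. -/

import Mathlib

noncomputable section
open Polynomial
open scoped Classical

/-- The real quaternions. -/
abbrev Quat := Quaternion ℝ

/-- Evaluation of a regular quaternionic polynomial `p` at `q`: `p(q) = Σᵢ qⁱ aᵢ`
(powers of the variable on the left of the right coefficients). -/
def pevP (p : Quat[X]) (q : Quat) : Quat := p.sum fun i a => q ^ i * a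

/-- The conjugate polynomial (coefficientwise quaternionic conjugation). -/
def pconj (p : Quat[X]) : Quat[X] := p.sum fun i a => Polynomial.monomial i (star a)

/-- The normal (symmetrized) polynomial `N(p) = p * conj(p)`; note that polynomial
multiplication in `Quat[X]` is exactly the star product (`w` central). -/
def Np (p : Quat[X]) : Quat[X] := p * pconj p

/-- The conjugacy class of `α`: quaternions with the same trace and the same norm. -/
def Sset (α : Quat) : Set Quat := {x | x + star x = α + star α ∧ ‖x‖ = ‖α‖}

/-- The characteristic polynomial of `α`: `Δ_α = X² - tr(α)·X + |α|²` (a polynomial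
with real, hence central, coefficients). -/
def Δpoly (α : Quat) : Quat[X] :=
  X ^ 2 - Polynomial.C (α + star α) * X + Polynomial.C (algebraMap ℝ Quat (‖α‖ ^ 2))

/-!
Dividing `f` on the left by `X - C α₁` leaves the constant remainder `f(α₁) = 0`, so
`f = (X - C α₁) * g` with `deg g = deg f - 1`, and the factorization follows by induction once
`g` has a zero. That zero comes from the fundamental theorem of algebra for regular polynomials:
`Np g = g * pconj g` has real coefficients, hence a complex root, i.e. a zero `β ∈ ℂ ⊂ ℍ`, and
then `g` itself vanishes somewhere on the sphere `Sset β`, on which every polynomial is affine.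
A zero of `g` yields a zero of `(X - C α₁) * g` on the same sphere, which propagates the
conjugacy statement through the induction.
-/

def pevAddHom (q : Quat) : Quat[X] →+ Quat :=
  (lsum fun i => LinearMap.mulLeft ℝ (q ^ i)).toAddMonoidHom

theorem pevAddHom_apply (q : Quat) (p : Quat[X]) : pevAddHom q p = pevP p q := rfl

theorem pevP_add (p r : Quat[X]) (q : Quat) : pevP (p + r) q = pevP p q + pevP r q :=
  map_add (pevAddHom q) p r

theorem pevP_sub (p r : Quat[X]) (q : Quat) : pevP (p - r) q = pevP p q - pevP r q :=
  map_sub (pevAddHom q) p r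

theorem pevP_monomial (i : ℕ) (a q : Quat) : pevP (monomial i a) q = q ^ i * a := by
  simp [pevP]

theorem pevP_C (a q : Quat) : pevP (C a) q = a := by
  simp [← monomial_zero_left, pevP_monomial]

theorem pevP_X_sub_C (α q : Quat) : pevP (X - C α) q = q - α := by
  simp [pevP_sub, pevP_C, ← monomial_one_one_eq_X, pevP_monomial]

theorem pevP_C_mul_X_add_C (a b q : Quat) : pevP (C b * X + C a) q = q * b + a := by
  rw [pevP_add, C_mul_X_eq_monomial, pevP_monomial, pevP_C, pow_one]

theorem pevP_mul_monomial (f : Quat[X]) (j : ℕ) (b q : Quat) :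
    pevP (f * monomial j b) q = q ^ j * pevP f q * b := by
  induction f using Polynomial.induction_on' with
  | add p r hp hr => rw [add_mul, pevP_add, pevP_add, hp, hr, mul_add, add_mul]
  | monomial i a =>
    rw [monomial_mul_monomial, pevP_monomial, pevP_monomial, pow_add, ← pow_mul_comm]
    noncomm_ring

theorem pevP_mul_of_semiconjBy {f : Quat[X]} {q q' : Quat} (h : SemiconjBy (pevP f q) q' q)
    (g : Quat[X]) : pevP (f * g) q = pevP f q * pevP g q' := by
  induction g using Polynomial.induction_on' with
  | add p r hp hr => rw [mul_add, pevP_add, pevP_add, hp, hr, mul_add]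
  | monomial j b => rw [pevP_mul_monomial, pevP_monomial, ← (h.pow_right j).eq, mul_assoc]

theorem pevP_mul_of_pevP_eq_zero {f : Quat[X]} {q : Quat} (h : pevP f q = 0) (g : Quat[X]) :
    pevP (f * g) q = 0 := by
  rw [pevP_mul_of_semiconjBy (q' := q) (by rw [h]; exact SemiconjBy.zero_left q q), h, zero_mul]

theorem pevP_eq_eval_of_commute {p : Quat[X]} {q : Quat} (h : ∀ i, Commute (p.coeff i) q) :
    pevP p q = p.eval q := by
  rw [pevP, eval_eq_sum]
  exact Finset.sum_congr rfl fun i _ => ((h i).pow_right i).eq.symm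

theorem pevP_map_algebraMap (P : ℝ[X]) (q : Quat) :
    pevP (P.map (algebraMap ℝ Quat)) q = aeval q P := by
  rw [pevP_eq_eval_of_commute fun i => by rw [coeff_map]; exact Algebra.commutes _ q,
    eval_map_algebraMap]

theorem commute_map_algebraMap {R A : Type*} [CommSemiring R] [Semiring A] [Algebra R A]
    (P : R[X]) (h : A[X]) : Commute (P.map (algebraMap R A)) h := by
  induction P using Polynomial.induction_on' with
  | add P R hP hR => rw [Polynomial.map_add]; exact hP.add_left hR
  | monomial n a =>
    rw [map_monomial, ← C_mul_X_pow_eq_monomial, ← Polynomial.algebraMap_apply]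
    exact (Algebra.commute_algebraMap_left a h).mul_left ((commute_X h).pow_left n)

theorem pconj_coeff (p : Quat[X]) (k : ℕ) : (pconj p).coeff k = star (p.coeff k) := by
  simp +contextual [pconj, coeff_monomial, Polynomial.sum_def]

theorem pevP_pconj (p : Quat[X]) (q : Quat) : pevP (pconj p) q = star (p.eval (star q)) := by
  rw [pconj, Polynomial.sum, ← pevAddHom_apply, map_sum, eval_eq_sum, Polynomial.sum, star_sum]
  refine Finset.sum_congr rfl fun i _ => ?_
  rw [pevAddHom_apply, pevP_monomial, star_mul, star_pow, star_star]

theorem Quaternion.re_mul_comm {R : Type*} [CommRing R] (a b : Quaternion R) :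
    (a * b).re = (b * a).re := by
  simp only [Quaternion.re_mul]
  ring

theorem Quaternion.algebraMap_norm_sq (x : Quat) : algebraMap ℝ Quat (‖x‖ ^ 2) = star x * x := by
  rw [Quaternion.star_mul_self, Quaternion.normSq_eq_norm_mul_self, sq]
  rfl

theorem mem_Sset_iff {x β : Quat} : x ∈ Sset β ↔ x.re = β.re ∧ ‖x‖ = ‖β‖ := by
  simp only [Sset, Set.mem_ofPred_eq, Quaternion.self_add_star', Quaternion.coe_inj,
    mul_right_inj' (two_ne_zero (α := ℝ))]

theorem mem_Sset_self (β : Quat) : β ∈ Sset β := ⟨rfl, rfl⟩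

theorem Sset_eq_of_mem {x β : Quat} (h : x ∈ Sset β) : Sset x = Sset β := by
  ext y
  simp only [Sset, Set.mem_ofPred_eq, h.1, h.2]

theorem star_mem_Sset {x β : Quat} (h : x ∈ Sset β) : star x ∈ Sset β := by
  rw [mem_Sset_iff] at h ⊢
  simpa using h

theorem conj_mem_Sset {x β : Quat} (h : x ∈ Sset β) {u : Quat} (hu : u ≠ 0) :
    u * x * u⁻¹ ∈ Sset β := by
  rw [mem_Sset_iff] at h ⊢
  refine ⟨?_, ?_⟩
  · rw [Quaternion.re_mul_comm, ← mul_assoc, inv_mul_cancel₀ hu, one_mul, h.1]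
  · rw [norm_mul, norm_mul, norm_inv, h.2]
    field_simp

theorem exists_mem_Sset_mul_eq (β c : Quat) : ∃ q ∈ Sset β, q * c = c * β := by
  rcases eq_or_ne c 0 with rfl | hc
  · exact ⟨β, mem_Sset_self β, by simp⟩
  · exact ⟨c * β * c⁻¹, conj_mem_Sset (mem_Sset_self β) hc, inv_mul_cancel_right₀ hc _⟩

theorem Δpoly_eq_map (β : Quat) :
    Δpoly β = (X ^ 2 - C (2 * β.re) * X + C (‖β‖ ^ 2)).map (algebraMap ℝ Quat) := by
  simp [Δpoly, Quaternion.self_add_star']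

theorem monic_Δpoly (β : Quat) : (Δpoly β).Monic := by
  unfold Δpoly
  monicity!

theorem natDegree_Δpoly (β : Quat) : (Δpoly β).natDegree = 2 := by
  unfold Δpoly
  compute_degree!

theorem eval_Δpoly_of_mem_Sset {y β : Quat} (hy : y ∈ Sset β) : (Δpoly β).eval y = 0 := by
  obtain ⟨htr, hnorm⟩ := hy
  simp only [Δpoly, eval_add, eval_sub, eval_C_mul, eval_X_pow, eval_X, eval_C, ← htr, ← hnorm,
    Quaternion.algebraMap_norm_sq]
  noncomm_ring

theorem pevP_Δpoly (β y : Quat) : pevP (Δpoly β) y = (Δpoly β).eval y := by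
  rw [Δpoly_eq_map, pevP_map_algebraMap, eval_map_algebraMap]

theorem eval_Δpoly_mul (β y : Quat) (h : Quat[X]) :
    (Δpoly β * h).eval y = h.eval y * (Δpoly β).eval y := by
  have hcomm : Commute (Δpoly β) h := by
    rw [Δpoly_eq_map]
    exact commute_map_algebraMap _ h
  rw [hcomm.eq, eval, eval, eval]
  refine eval₂_mul_noncomm _ _ fun k => ?_
  rw [RingHom.id_apply, Δpoly_eq_map, coeff_map]
  exact Algebra.commute_algebraMap_left _ y

/-- Both evaluations of `g` on the sphere agree with those of its remainder modulo
`Δpoly β`, since `Δpoly β` is central and vanishes on the sphere. -/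
theorem exists_affine_on_Sset (β : Quat) (g : Quat[X]) :
    ∃ a b : Quat, ∀ y ∈ Sset β, pevP g y = y * b + a ∧ g.eval y = b * y + a := by
  set r := g %ₘ Δpoly β
  have hr : r = C (r.coeff 1) * X + C (r.coeff 0) := by
    refine eq_X_add_C_of_natDegree_le_one (Nat.le_of_lt_succ ?_)
    rw [Nat.succ_eq_add_one, one_add_one_eq_two, ← natDegree_Δpoly β]
    exact natDegree_modByMonic_lt g (monic_Δpoly β) fun h => by simpa [h] using natDegree_Δpoly β
  refine ⟨r.coeff 0, r.coeff 1, fun y hy => ?_⟩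
  have hΔ := eval_Δpoly_of_mem_Sset hy
  have hsplit : r + Δpoly β * (g /ₘ Δpoly β) = g := modByMonic_add_div g (Δpoly β)
  rw [hr] at hsplit
  constructor
  · rw [← hsplit, pevP_add, pevP_C_mul_X_add_C,
      pevP_mul_of_pevP_eq_zero (by rw [pevP_Δpoly, hΔ]), add_zero]
  · rw [← hsplit, eval_add, eval_Δpoly_mul, hΔ, mul_zero, add_zero]
    simp

theorem support_pconj (p : Quat[X]) : (pconj p).support = p.support := by
  ext k
  simp [mem_support_iff, pconj_coeff]

theorem natDegree_pconj (p : Quat[X]) : (pconj p).natDegree = p.natDegree := by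
  simp only [natDegree, degree, support_pconj]

theorem leadingCoeff_pconj (p : Quat[X]) : (pconj p).leadingCoeff = star p.leadingCoeff := by
  rw [leadingCoeff, leadingCoeff, natDegree_pconj, pconj_coeff]

theorem natDegree_Np (g : Quat[X]) : (Np g).natDegree = 2 * g.natDegree := by
  rcases eq_or_ne g 0 with rfl | hg
  · simp [Np]
  rw [Np, natDegree_mul', natDegree_pconj, two_mul]
  rw [leadingCoeff_pconj, Quaternion.self_mul_star, ← Quaternion.coe_zero, Ne,
    Quaternion.coe_inj, Quaternion.normSq_eq_zero]
  exact leadingCoeff_ne_zero.mpr hg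

theorem star_coeff_Np (g : Quat[X]) (k : ℕ) : star ((Np g).coeff k) = (Np g).coeff k := by
  rw [Np, coeff_mul, star_sum, ← Finset.Nat.sum_antidiagonal_swap]
  refine Finset.sum_congr rfl fun x _ => ?_
  simp [pconj_coeff]

theorem exists_map_eq_Np (g : Quat[X]) : ∃ Q : ℝ[X], Q.map (algebraMap ℝ Quat) = Np g :=
  (mem_lifts _).mp <| (lifts_iff_coeff_lifts _).mpr fun k =>
    ⟨((Np g).coeff k).re, (Quaternion.star_eq_self.mp (star_coeff_Np g k)).symm⟩

theorem exists_pevP_Np_eq_zero {g : Quat[X]} (hg : 0 < g.natDegree) :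
    ∃ β, pevP (Np g) β = 0 := by
  obtain ⟨Q, hQ⟩ := exists_map_eq_Np g
  have hQdeg : Q.natDegree = 2 * g.natDegree := by
    rw [← natDegree_Np, ← hQ, natDegree_map_eq_of_injective (algebraMap ℝ Quat).injective]
  obtain ⟨z, hz⟩ := IsAlgClosed.exists_aeval_eq_zero ℂ Q
    (natDegree_pos_iff_degree_pos.mp (by omega)).ne'
  exact ⟨Quaternion.ofComplex z, by
    rw [← hQ, pevP_map_algebraMap, aeval_algHom_apply, hz, map_zero]⟩

/-- Either `g(β) = 0`, or `pconj g` vanishes at a conjugate of `β`, i.e. `g` has a left zero `y`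
on the sphere; conjugation by the linear coefficient of `g` on the sphere turns it into a right
zero. -/
theorem exists_mem_Sset_pevP_eq_zero {g : Quat[X]} {β : Quat} (h : pevP (Np g) β = 0) :
    ∃ x ∈ Sset β, pevP g x = 0 := by
  set p := pevP g β
  by_cases hp : p = 0
  · exact ⟨β, mem_Sset_self β, hp⟩
  have hsemi : SemiconjBy p (p⁻¹ * β * p) β := by
    rw [SemiconjBy, ← mul_assoc, ← mul_assoc, mul_inv_cancel₀ hp, one_mul]
  have hconj : pevP (pconj g) (p⁻¹ * β * p) = 0 := by
    rwa [Np, pevP_mul_of_semiconjBy hsemi, mul_eq_zero, or_iff_right hp] at h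
  set y := star (p⁻¹ * β * p)
  have hy : y ∈ Sset β :=
    star_mem_Sset (by simpa using conj_mem_Sset (mem_Sset_self β) (inv_ne_zero hp))
  have hgy : g.eval y = 0 := by rwa [pevP_pconj, star_eq_zero] at hconj
  obtain ⟨a, b, hab⟩ := exists_affine_on_Sset β g
  rcases eq_or_ne b 0 with rfl | hb
  · have ha : a = 0 := by simpa [hgy] using (hab y hy).2.symm
    exact absurd (by simpa [ha] using (hab β (mem_Sset_self β)).1) hp
  refine ⟨b * y * b⁻¹, conj_mem_Sset hy hb, ?_⟩
  rw [(hab _ (conj_mem_Sset hy hb)).1, inv_mul_cancel_right₀ hb, ← (hab y hy).2, hgy]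

theorem exists_pevP_eq_zero {g : Quat[X]} (hg : 0 < g.natDegree) : ∃ x, pevP g x = 0 := by
  obtain ⟨β, hβ⟩ := exists_pevP_Np_eq_zero hg
  obtain ⟨x, -, hx⟩ := exists_mem_Sset_pevP_eq_zero hβ
  exact ⟨x, hx⟩

theorem exists_X_sub_C_mul_eq {f : Quat[X]} {α : Quat} (h : pevP f α = 0) :
    ∃ g : Quat[X], g.natDegree = f.natDegree - 1 ∧ (X - C α) * g = f := by
  refine ⟨f /ₘ (X - C α), by rw [natDegree_divByMonic f (monic_X_sub_C α), natDegree_X_sub_C], ?_⟩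
  have hsplit := modByMonic_add_div f (X - C α)
  set r := f %ₘ (X - C α)
  have hr : r = C (r.coeff 0) := eq_C_of_degree_le_zero <| Nat.WithBot.lt_one_iff_le_zero.mp <| by
    simpa using degree_modByMonic_lt f (monic_X_sub_C α)
  have hX : pevP (X - C α) α = 0 := by rw [pevP_X_sub_C, sub_self]
  have hr0 : r.coeff 0 = 0 := by
    have hα := congrArg (fun p => pevP p α) hsplit
    simp only [pevP_add, pevP_mul_of_pevP_eq_zero hX, add_zero, h] at hα
    rwa [hr, pevP_C] at hα
  rwa [hr, hr0, C_0, zero_add] at hsplit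

/-- The zero is the point `q` of the sphere with `q * (star β - α) = (star β - α) * β`. -/
theorem exists_mem_Sset_pevP_X_sub_C_mul_eq_zero (α : Quat) {g : Quat[X]} {β : Quat}
    (hg : pevP g β = 0) : ∃ q ∈ Sset β, pevP ((X - C α) * g) q = 0 := by
  obtain ⟨q, hq, hqc⟩ := exists_mem_Sset_mul_eq β (star β - α)
  have hΔ : q ^ 2 - (β + star β) * q + star β * β = 0 := by
    simpa [Δpoly, eval_X_pow, Quaternion.algebraMap_norm_sq] using eval_Δpoly_of_mem_Sset hq
  have htr : (β + star β) * q = q * (β + star β) := by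
    rw [Quaternion.self_add_star', Quaternion.coe_commutes]
  have key : (q - α) * β - q * (q - α)
      = (star β - α) * β - q * (star β - α) - (q ^ 2 - (β + star β) * q + star β * β)
        - ((β + star β) * q - q * (β + star β)) := by
    noncomm_ring
  rw [hqc, hΔ, htr, sub_self, sub_self, sub_self, sub_zero] at key
  have hsemi : SemiconjBy (pevP (X - C α) q) β q := by
    rw [SemiconjBy, pevP_X_sub_C]
    exact sub_eq_zero.mp key
  exact ⟨q, hq, by rw [pevP_mul_of_semiconjBy hsemi, hg, mul_zero]⟩

theorem exists_factorization {n : ℕ} (hn : 0 < n) {f : Quat[X]} (hf : f.natDegree = n)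
    {α₁ : Quat} (hα₁ : pevP f α₁ = 0) :
    ∃ (αs : Fin n → Quat) (c : Quat), c ≠ 0 ∧ αs ⟨0, hn⟩ = α₁ ∧
      f = (List.ofFn fun j => X - C (αs j)).foldr (· * ·) (C c) ∧
      ∀ j, ∃ q : Quat, pevP f q = 0 ∧ αs j ∈ Sset q := by
  induction n, hn using Nat.le_induction generalizing f α₁ with
  | base =>
    obtain ⟨g, hg, rfl⟩ := exists_X_sub_C_mul_eq hα₁
    obtain ⟨c, rfl⟩ : ∃ c, g = C c := ⟨_, eq_C_of_natDegree_eq_zero (by rw [hg, hf])⟩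
    have hc : c ≠ 0 := by
      rintro rfl
      simp at hf
    exact ⟨fun _ => α₁, c, hc, rfl, by simp, fun _ => ⟨α₁, hα₁, mem_Sset_self α₁⟩⟩
  | succ n hn ih =>
    obtain ⟨g, hg, rfl⟩ := exists_X_sub_C_mul_eq hα₁
    rw [hf, Nat.add_sub_cancel] at hg
    obtain ⟨β, hβ⟩ := exists_pevP_eq_zero (hg ▸ hn)
    obtain ⟨αs, c, hc, -, hfactor, hroots⟩ := ih hg hβ
    refine ⟨Fin.cons α₁ αs, c, hc, rfl, by rw [List.ofFn_succ, hfactor]; simp, ?_⟩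
    refine Fin.cases ⟨α₁, hα₁, mem_Sset_self α₁⟩ fun i => ?_
    obtain ⟨q', hq', hαq'⟩ := hroots i
    obtain ⟨q, hq, hfq⟩ := exists_mem_Sset_pevP_X_sub_C_mul_eq_zero α₁ hq'
    exact ⟨q, hfq, by rwa [Fin.cons_succ, Sset_eq_of_mem hq]⟩

/-- Factorization lemma: a regular quaternionic polynomial of degree `n > 0` with a
zero `α₁` factors as `f = (w - α₁) * ((w - α₂) * (⋯ * ((w - αₙ) * c)))` with `c ≠ 0`
(the product in `Quat[X]` being the star product), and each `αⱼ` is conjugate to some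
zero of `f`. -/
theorem stmt18 (f : Quat[X]) (hn : 0 < f.natDegree)
    (α₁ : Quat) (hα₁ : pevP f α₁ = 0) :
    ∃ (αs : Fin f.natDegree → Quat) (c : Quat), c ≠ 0 ∧ αs ⟨0, hn⟩ = α₁ ∧
      f = (List.ofFn fun j => X - Polynomial.C (αs j)).foldr (· * ·) (Polynomial.C c) ∧
      ∀ j, ∃ q : Quat, pevP f q = 0 ∧ αs j ∈ Sset q :=
  exists_factorization hn rfl hα₁
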